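/- arXiv:2101.12179 — 2 statements merged into one kernel-verified Lean document; each statement's English description precedes it below -/
import Mathlib

section
/- For every integer k ≥ 0, every strictly increasing knot vector ξ = (ξ_1, …, ξ_{k+2}) with 0 ≤ ξ_1 < ξ_2 < … < ξ_{k+2} ≤ 1, every 1 ≤ p, q < ∞ and every α with 0 < α < k + 1/p, the B-spline basis function B_k(·; ξ) belongs to the Besov space B^α_{p,q}([0,1]); that is, B_k(·; ξ) restricted to [0,1] lies in L^p([0,1]) and its Besov seminorm |B_k(·; ξ)|_{B^α_{p,q}} is finite. (Theorem 1 of the paper.) -/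
/-
By the Cox–de Boor recursion, `B_k(·; ξ) = Σᵢ cᵢ (ξᵢ - x)₊ ^ k` is a combination of truncated
powers with knots `ξᵢ ≤ 1`. Let `r` be the smallest integer above `α`; then `r ≤ k + 1`.
If `r ≤ k`, the `r`-th difference of `(a - x)₊ ^ k` with step `h` is `O(h ^ r)` everywhere:
where all nodes lie left of `a`, it is the binomial expansion in powers of `h` with the terms
below `h ^ r` removed, since `r`-th differences kill polynomials of degree `< r`. If `r = k + 1`,
the difference vanishes except within `r h` of a knot, where it is `O(h ^ k)`, so its `L^p` norm
is `O(h ^ (k + 1 / p))`. Either way `ω_r(B_k, t)_p ≤ C min(t, 1) ^ β` with `β > α`, and the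
Besov integral converges at `0` and at `∞`.
-/

open MeasureTheory Set
open scoped ENNReal

/-- B-spline basis function of degree `k` with knot vector `ξ = (ξ₀, …, ξ_{k+1})`
(0-indexed), defined by the Cox–de Boor recursion. -/
noncomputable def bspline : (k : ℕ) → (Fin (k + 2) → ℝ) → ℝ → ℝ
  | 0, ξ, x => if ξ 0 ≤ x ∧ x < ξ 1 then 1 else 0
  | (m + 1), ξ, x =>
      (x - ξ 0) / (ξ ⟨m + 1, by omega⟩ - ξ 0) * bspline m (fun i => ξ i.castSucc) x
      + (ξ (Fin.last (m + 2)) - x) / (ξ (Fin.last (m + 2)) - ξ 1) *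
          bspline m (fun i => ξ i.succ) x

/-- The `r`-th order forward finite difference `Δ_h^r f (x)`. -/
noncomputable def finiteDiff (r : ℕ) (h : ℝ) (f : ℝ → ℝ) (x : ℝ) : ℝ :=
  ∑ j ∈ Finset.range (r + 1), (r.choose j : ℝ) * (-1 : ℝ) ^ (r - j) * f (x + j * h)

/-- The `r`-th order modulus of smoothness `ω_r(f, t)_p` on `[0,1]`. -/
noncomputable def modSmooth (p : ℝ) (r : ℕ) (f : ℝ → ℝ) (t : ℝ) : ℝ :=
  sSup ((fun h => (∫ x in Set.Ioo (0 : ℝ) (1 - r * h), |finiteDiff r h f x| ^ p) ^ (1 / p)) ''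
    Set.Ioc 0 t)

/-- The smallest integer `r` with `r > α` (for `α > 0`). -/
noncomputable def besovR (α : ℝ) : ℕ := ⌊α⌋₊ + 1

/-- The Besov seminorm `|f|_{B^α_{p,q}}` on `[0,1]`, valued in `ℝ≥0∞`. -/
noncomputable def besovSeminorm (p q α : ℝ) (f : ℝ → ℝ) : ℝ≥0∞ :=
  (∫⁻ t in Set.Ioi (0 : ℝ),
      ENNReal.ofReal ((t ^ (-α) * modSmooth p (besovR α) f t) ^ q / t)) ^ (1 / q)

/-- Membership in the Besov space `B^α_{p,q}([0,1])`: `f ∈ L^p([0,1])` and the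
Besov seminorm is finite. -/
def memBesov (p q α : ℝ) (f : ℝ → ℝ) : Prop :=
  MemLp f (ENNReal.ofReal p) (volume.restrict (Set.Icc (0 : ℝ) 1)) ∧
  besovSeminorm p q α f < ⊤

theorem finiteDiff_eq_fwdDiff_iter (r : ℕ) (h : ℝ) (f : ℝ → ℝ) (x : ℝ) :
    finiteDiff r h f x = (fwdDiff h)^[r] f x := by
  rw [fwdDiff_iter_eq_sum_shift, finiteDiff]
  refine Finset.sum_congr rfl fun j _ => ?_
  rw [zsmul_eq_mul, nsmul_eq_mul]
  push_cast
  ring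

theorem finiteDiff_pow_eq_zero_of_lt {r m : ℕ} (hm : m < r) (x : ℝ) :
    finiteDiff r 1 (fun y => y ^ m) x = 0 := by
  rw [finiteDiff_eq_fwdDiff_iter, fwdDiff_iter_pow_eq_zero_of_lt hm, Pi.zero_apply]

theorem finiteDiff_sum {ι : Type*} (s : Finset ι) (c : ι → ℝ) (g : ι → ℝ → ℝ)
    (r : ℕ) (h x : ℝ) :
    finiteDiff r h (fun y => ∑ i ∈ s, c i * g i y) x = ∑ i ∈ s, c i * finiteDiff r h (g i) x := by
  simp only [finiteDiff, Finset.mul_sum]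
  rw [Finset.sum_comm]
  refine Finset.sum_congr rfl fun i _ => Finset.sum_congr rfl fun j _ => ?_
  ring

theorem abs_finiteDiff_le {r : ℕ} {h x C : ℝ} {f : ℝ → ℝ}
    (hf : ∀ j ≤ r, |f (x + j * h)| ≤ C) : |finiteDiff r h f x| ≤ 2 ^ r * C := by
  calc |finiteDiff r h f x|
      ≤ ∑ j ∈ Finset.range (r + 1), |(r.choose j : ℝ) * (-1) ^ (r - j) * f (x + j * h)| :=
        Finset.abs_sum_le_sum_abs _ _
    _ ≤ ∑ j ∈ Finset.range (r + 1), (r.choose j : ℝ) * C := by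
        refine Finset.sum_le_sum fun j hj => ?_
        rw [abs_mul, abs_mul, abs_pow, abs_neg, abs_one, one_pow, mul_one, Nat.abs_cast]
        exact mul_le_mul_of_nonneg_left (hf j (Finset.mem_range_succ_iff.mp hj)) (by positivity)
    _ = 2 ^ r * C := by
        rw [← Finset.sum_mul, ← Nat.cast_sum, Nat.sum_range_choose, Nat.cast_pow, Nat.cast_ofNat]

theorem abs_finiteDiff_sum_le {ι : Type*} (s : Finset ι) (c : ι → ℝ) (g : ι → ℝ → ℝ)
    {r : ℕ} {h x B : ℝ} (hg : ∀ i ∈ s, |finiteDiff r h (g i) x| ≤ B) :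
    |finiteDiff r h (fun y => ∑ i ∈ s, c i * g i y) x| ≤ (∑ i ∈ s, |c i|) * B := by
  rw [finiteDiff_sum, Finset.sum_mul]
  refine (Finset.abs_sum_le_sum_abs _ _).trans (Finset.sum_le_sum fun i hi => ?_)
  rw [abs_mul]
  exact mul_le_mul_of_nonneg_left (hg i hi) (abs_nonneg _)

noncomputable def truncPow (k : ℕ) (a x : ℝ) : ℝ := if x < a then (a - x) ^ k else 0

section truncPow

variable {k r : ℕ} {a x h : ℝ}

theorem truncPow_succ : truncPow (k + 1) a x = (a - x) * truncPow k a x := by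
  unfold truncPow
  split_ifs <;> ring

theorem measurable_truncPow (k : ℕ) (a : ℝ) : Measurable (truncPow k a) :=
  Measurable.ite (measurableSet_lt measurable_id measurable_const)
    ((measurable_const.sub measurable_id).pow_const k) measurable_const

theorem abs_truncPow_le {c : ℝ} (hc : 0 ≤ c) (hax : a - x ≤ c) : |truncPow k a x| ≤ c ^ k := by
  unfold truncPow
  split_ifs with hxa
  · rw [abs_of_nonneg (pow_nonneg (by linarith) _)]
    exact pow_le_pow_left₀ (by linarith) hax _
  · simpa using pow_nonneg hc k

theorem finiteDiff_truncPow_eq_zero_of_le (hh : 0 ≤ h) (hax : a ≤ x) :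
    finiteDiff r h (truncPow k a) x = 0 :=
  Finset.sum_eq_zero fun j _ => by
    rw [truncPow, if_neg (not_lt.mpr (by nlinarith [(j.cast_nonneg : (0 : ℝ) ≤ j)])), mul_zero]

theorem finiteDiff_truncPow_eq_sum_of_lt (hh : 0 ≤ h) (hlt : x + r * h < a) :
    finiteDiff r h (truncPow k a) x = ∑ m ∈ Finset.range (k + 1),
      (k.choose m : ℝ) * (a - x) ^ (k - m) * (-h) ^ m * finiteDiff r 1 (fun y => y ^ m) 0 := by
  have hnode : ∀ j ∈ Finset.range (r + 1), truncPow k a (x + j * h)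
      = ∑ m ∈ Finset.range (k + 1), (k.choose m : ℝ) * (a - x) ^ (k - m) * (-h) ^ m * j ^ m := by
    intro j hj
    have hjr : (j : ℝ) ≤ r := by exact_mod_cast Finset.mem_range_succ_iff.mp hj
    rw [truncPow, if_pos (by nlinarith), show a - (x + j * h) = -h * j + (a - x) by ring, add_pow]
    refine Finset.sum_congr rfl fun m _ => ?_
    ring
  simp only [finiteDiff, Finset.mul_sum, zero_add, mul_one]
  rw [Finset.sum_congr rfl fun j hj => by rw [hnode j hj, Finset.mul_sum], Finset.sum_comm]
  refine Finset.sum_congr rfl fun m _ => Finset.sum_congr rfl fun j _ => ?_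
  ring

theorem finiteDiff_truncPow_eq_zero_of_degree_lt (hkr : k < r) (hh : 0 ≤ h)
    (hlt : x + r * h < a) : finiteDiff r h (truncPow k a) x = 0 := by
  rw [finiteDiff_truncPow_eq_sum_of_lt hh hlt]
  refine Finset.sum_eq_zero fun m hm => ?_
  rw [finiteDiff_pow_eq_zero_of_lt (by grind) 0, mul_zero]

theorem abs_finiteDiff_truncPow_le (hh : 0 ≤ h) (hx : a - r * h ≤ x) :
    |finiteDiff r h (truncPow k a) x| ≤ 2 ^ r * (r * h) ^ k :=
  abs_finiteDiff_le fun j _ =>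
    abs_truncPow_le (by positivity) (by nlinarith [(j.cast_nonneg : (0 : ℝ) ≤ j)])

theorem abs_finiteDiff_truncPow_le_pow_of_lt (hh : 0 ≤ h) (hh1 : h ≤ 1) (hlt : x + r * h < a)
    (hax : a - x ≤ 1) : |finiteDiff r h (truncPow k a) x| ≤ 2 ^ r * (r + 1) ^ k * h ^ r := by
  have hxa : 0 ≤ a - x := by nlinarith [(r.cast_nonneg : (0 : ℝ) ≤ r)]
  have hterm : ∀ m ∈ Finset.range (k + 1),
      |(k.choose m : ℝ) * (a - x) ^ (k - m) * (-h) ^ m * finiteDiff r 1 (fun y => y ^ m) 0|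
        ≤ (k.choose m : ℝ) * r ^ m * (2 ^ r * h ^ r) := by
    intro m _
    rcases lt_or_ge m r with hmr | hrm
    · rw [finiteDiff_pow_eq_zero_of_lt hmr, mul_zero, abs_zero]
      positivity
    have hpow : |finiteDiff r 1 (fun y => y ^ m) 0| ≤ 2 ^ r * r ^ m :=
      abs_finiteDiff_le fun j hj => by
        rw [zero_add, mul_one, abs_pow, Nat.abs_cast]
        exact pow_le_pow_left₀ j.cast_nonneg (by exact_mod_cast hj) m
    rw [abs_mul, abs_mul, abs_mul, Nat.abs_cast, abs_pow, abs_pow, abs_neg, abs_of_nonneg hxa,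
      abs_of_nonneg hh]
    calc (k.choose m : ℝ) * (a - x) ^ (k - m) * h ^ m * |finiteDiff r 1 (fun y => y ^ m) 0|
        ≤ k.choose m * 1 * h ^ r * (2 ^ r * r ^ m) := by
          gcongr _ * ?_ * ?_ * ?_
          · exact pow_le_one₀ hxa hax
          · exact pow_le_pow_of_le_one hh hh1 hrm
      _ = (k.choose m : ℝ) * r ^ m * (2 ^ r * h ^ r) := by ring
  rw [finiteDiff_truncPow_eq_sum_of_lt hh hlt]
  refine (Finset.abs_sum_le_sum_abs _ _).trans <| (Finset.sum_le_sum hterm).trans_eq ?_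
  rw [← Finset.sum_mul, add_pow]
  simp only [one_pow, mul_one]
  rw [Finset.sum_congr rfl fun m _ => mul_comm _ _]
  ring

theorem abs_finiteDiff_truncPow_le_pow (hrk : r ≤ k) (hh : 0 ≤ h) (hh1 : h ≤ 1)
    (hax : a - x ≤ 1) : |finiteDiff r h (truncPow k a) x| ≤ 2 ^ r * (r + 1) ^ k * h ^ r := by
  rcases le_or_gt a x with hax' | hxa
  · rw [finiteDiff_truncPow_eq_zero_of_le hh hax', abs_zero]
    positivity
  rcases lt_or_ge (x + r * h) a with hlt | hge
  · exact abs_finiteDiff_truncPow_le_pow_of_lt hh hh1 hlt hax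
  calc |finiteDiff r h (truncPow k a) x| ≤ 2 ^ r * (r * h) ^ k :=
        abs_finiteDiff_truncPow_le hh (by linarith)
    _ = 2 ^ r * r ^ k * h ^ k := by ring
    _ ≤ 2 ^ r * (r + 1) ^ k * h ^ r := by
        gcongr _ * ?_ * ?_
        · exact pow_le_pow_left₀ r.cast_nonneg (by linarith) k
        · exact pow_le_pow_of_le_one hh hh1 hrk

theorem abs_finiteDiff_truncPow_le_of_degree_lt (hkr : k < r) (hh : 0 ≤ h) :
    |finiteDiff r h (truncPow k a) x| ≤ 2 ^ r * (r * h) ^ k := by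
  rcases lt_or_ge (x + r * h) a with hlt | hge
  · rw [finiteDiff_truncPow_eq_zero_of_degree_lt hkr hh hlt, abs_zero]
    positivity
  · exact abs_finiteDiff_truncPow_le hh (by linarith)

theorem finiteDiff_truncPow_eq_zero_of_notMem (hkr : k < r) (hh : 0 ≤ h)
    (hx : x ∉ Icc (a - r * h) a) : finiteDiff r h (truncPow k a) x = 0 := by
  rcases lt_or_ge x (a - r * h) with hlt | hge
  · exact finiteDiff_truncPow_eq_zero_of_degree_lt hkr hh (by linarith)
  · exact finiteDiff_truncPow_eq_zero_of_le hh (not_lt.mp fun hxa => hx ⟨hge, hxa.le⟩)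

end truncPow

-- The factor `1` at `j = i` keeps the product over all of `Fin n`, so that
-- `Fin.prod_univ_castSucc` and `Fin.prod_univ_succ` apply.
noncomputable def knotWeight {n : ℕ} (ξ : Fin n → ℝ) (i : Fin n) : ℝ :=
  ∏ j, if j = i then 1 else (ξ i - ξ j)⁻¹

section knotWeight

variable {n : ℕ} {ξ : Fin (n + 1) → ℝ}

theorem knotWeight_castSucc (hξ : Function.Injective ξ) (i : Fin n) :
    knotWeight (fun j => ξ j.castSucc) i
      = (ξ i.castSucc - ξ (Fin.last n)) * knotWeight ξ i.castSucc := by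
  have hne : ξ i.castSucc - ξ (Fin.last n) ≠ 0 :=
    sub_ne_zero.mpr (hξ.ne (Fin.castSucc_lt_last i).ne)
  rw [knotWeight, knotWeight, Fin.prod_univ_castSucc, if_neg (Fin.castSucc_lt_last i).ne',
    mul_left_comm, mul_inv_cancel₀ hne, mul_one]
  simp only [Fin.castSucc_inj]

theorem knotWeight_succ (hξ : Function.Injective ξ) (i : Fin n) :
    knotWeight (fun j => ξ j.succ) i = (ξ i.succ - ξ 0) * knotWeight ξ i.succ := by
  have hne : ξ i.succ - ξ 0 ≠ 0 := sub_ne_zero.mpr (hξ.ne (Fin.succ_ne_zero i))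
  rw [knotWeight, knotWeight, Fin.prod_univ_succ, if_neg (Fin.succ_ne_zero i).symm,
    ← mul_assoc, mul_inv_cancel₀ hne, one_mul]
  simp only [Fin.succ_inj]

end knotWeight

theorem bspline_zero_eq_sum_truncPow {ξ : Fin 2 → ℝ} (hξ : ξ 0 < ξ 1) (x : ℝ) :
    bspline 0 ξ x = (ξ 1 - ξ 0) * ∑ i, knotWeight ξ i * truncPow 0 (ξ i) x := by
  have hne : ξ 1 - ξ 0 ≠ 0 := (sub_pos.mpr hξ).ne'
  have hneg : (ξ 1 - ξ 0) * (ξ 0 - ξ 1)⁻¹ = -1 := by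
    rw [← neg_sub, neg_mul, mul_inv_cancel₀ (sub_ne_zero.mpr hξ.ne)]
  simp only [knotWeight, Fin.sum_univ_two, Fin.prod_univ_two, Fin.isValue, zero_ne_one,
    one_ne_zero, if_true, if_false, one_mul, mul_one]
  rw [mul_add, ← mul_assoc, ← mul_assoc, hneg, mul_inv_cancel₀ hne, bspline]
  simp only [truncPow, pow_zero]
  split_ifs <;> grind

/-- `B_k(·; ξ)` is `ξ_{k+1} - ξ_0` times the divided difference of `t ↦ (t - x)₊ ^ k` at the
knots `ξ`, whose weights are `knotWeight ξ`. -/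
theorem bspline_eq_sum_truncPow : ∀ {k : ℕ} {ξ : Fin (k + 2) → ℝ}, StrictMono ξ → ∀ x,
    bspline k ξ x = (ξ (Fin.last (k + 1)) - ξ 0) * ∑ i, knotWeight ξ i * truncPow k (ξ i) x
  | 0, ξ, hξ, x => bspline_zero_eq_sum_truncPow (hξ Fin.zero_lt_one) x
  | m + 1, ξ, hξ, x => by
    have hinj := hξ.injective
    set η := Fin.last (m + 2)
    have hL : (x - ξ 0) / (ξ (Fin.last (m + 1)).castSucc - ξ 0) *
          bspline m (fun i => ξ i.castSucc) x
        = ∑ j, (x - ξ 0) * (ξ j - ξ η) * knotWeight ξ j * truncPow m (ξ j) x := by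
      have hne : ξ (Fin.last (m + 1)).castSucc - ξ 0 ≠ 0 :=
        (sub_pos.mpr (hξ (show (0 : Fin (m + 3)) < (Fin.last (m + 1)).castSucc by
          simp [Fin.lt_def]))).ne'
      conv_rhs => rw [Fin.sum_univ_castSucc, sub_self, mul_zero, zero_mul, zero_mul, add_zero]
      rw [bspline_eq_sum_truncPow (ξ := fun i => ξ i.castSucc)
          (hξ.comp Fin.strictMono_castSucc) x, Fin.castSucc_zero, ← mul_assoc,
        div_mul_cancel₀ _ hne, Finset.mul_sum]
      refine Finset.sum_congr rfl fun i _ => ?_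
      rw [knotWeight_castSucc hinj]
      ring
    have hR : (ξ η - x) / (ξ η - ξ 1) * bspline m (fun i => ξ i.succ) x
        = ∑ j, (ξ η - x) * (ξ j - ξ 0) * knotWeight ξ j * truncPow m (ξ j) x := by
      have hne : ξ η - ξ 1 ≠ 0 := (sub_pos.mpr (hξ (Fin.one_lt_last))).ne'
      conv_rhs => rw [Fin.sum_univ_succ, sub_self, mul_zero, zero_mul, zero_mul, zero_add]
      rw [bspline_eq_sum_truncPow (ξ := fun i => ξ i.succ) (hξ.comp Fin.strictMono_succ) x,
        Fin.succ_last, Fin.succ_zero_eq_one, ← mul_assoc, div_mul_cancel₀ _ hne,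
        Finset.mul_sum]
      refine Finset.sum_congr rfl fun i _ => ?_
      rw [knotWeight_succ hinj]
      ring
    calc bspline (m + 1) ξ x
        = (x - ξ 0) / (ξ (Fin.last (m + 1)).castSucc - ξ 0) *
              bspline m (fun i => ξ i.castSucc) x
          + (ξ η - x) / (ξ η - ξ 1) * bspline m (fun i => ξ i.succ) x := rfl
      _ = (ξ η - ξ 0) * ∑ j, knotWeight ξ j * truncPow (m + 1) (ξ j) x := by
        rw [hL, hR, ← Finset.sum_add_distrib, Finset.mul_sum]
        refine Finset.sum_congr rfl fun j _ => ?_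
        -- `(x - ξ₀)(ξⱼ - ξ_η) + (ξ_η - x)(ξⱼ - ξ₀) = (ξ_η - ξ₀)(ξⱼ - x)`
        rw [truncPow_succ]
        ring

theorem integral_abs_rpow_rpow_le {X : Type*} [MeasurableSpace X] {μ : Measure X} {p C m : ℝ}
    (hp : 0 < p) (hC : 0 ≤ C) (hm : 0 ≤ m) {s t : Set X} (hs : MeasurableSet s)
    (ht : MeasurableSet t) (htm : μ t ≤ ENNReal.ofReal m) {g : X → ℝ}
    (hbound : ∀ x ∈ s, |g x| ≤ C) (hsupp : ∀ x ∈ s, x ∉ t → g x = 0) :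
    (∫ x in s, |g x| ^ p ∂μ) ^ (1 / p) ≤ m ^ (1 / p) * C := by
  have hle : ∀ x ∈ s, |g x| ^ p ≤ t.indicator (fun _ => C ^ p) x := by
    intro x hx
    by_cases hxt : x ∈ t
    · rw [indicator_of_mem hxt]
      exact Real.rpow_le_rpow (abs_nonneg _) (hbound x hx) hp.le
    · rw [indicator_of_notMem hxt, hsupp x hx hxt, abs_zero, Real.zero_rpow hp.ne']
  have hst : (μ.restrict s) t ≤ ENNReal.ofReal m :=
    (Measure.restrict_apply_le _ _).trans htm
  have hint : ∫ x in s, |g x| ^ p ∂μ ≤ m * C ^ p := by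
    refine (integral_mono_of_nonneg (ae_of_all _ fun x => by positivity) ?_
      (ae_restrict_of_forall_mem hs hle)).trans ?_
    · exact (integrable_indicator_iff ht).mpr
        (integrableOn_const (hst.trans_lt ENNReal.ofReal_lt_top).ne)
    · rw [integral_indicator_const _ ht, smul_eq_mul]
      exact mul_le_mul_of_nonneg_right (ENNReal.toReal_le_of_le_ofReal hm hst) (by positivity)
  calc (∫ x in s, |g x| ^ p ∂μ) ^ (1 / p) ≤ (m * C ^ p) ^ (1 / p) :=
        Real.rpow_le_rpow (integral_nonneg fun x => by positivity) hint (by positivity)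
    _ = m ^ (1 / p) * C := by
        rw [Real.mul_rpow hm (by positivity), ← Real.rpow_mul hC, mul_one_div_cancel hp.ne',
          Real.rpow_one]

noncomputable def finiteDiffNorm (p : ℝ) (r : ℕ) (f : ℝ → ℝ) (h : ℝ) : ℝ :=
  (∫ x in Ioo (0 : ℝ) (1 - r * h), |finiteDiff r h f x| ^ p) ^ (1 / p)

theorem finiteDiffNorm_nonneg (p : ℝ) (r : ℕ) (f : ℝ → ℝ) (h : ℝ) :
    0 ≤ finiteDiffNorm p r f h :=
  Real.rpow_nonneg (integral_nonneg fun _ => by positivity) _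

theorem finiteDiffNorm_eq_zero {p : ℝ} (hp : 0 < p) {r : ℕ} (f : ℝ → ℝ) {h : ℝ}
    (hrh : 1 ≤ r * h) : finiteDiffNorm p r f h = 0 := by
  rw [finiteDiffNorm, Ioo_eq_empty (by linarith), Measure.restrict_empty, integral_zero_measure,
    Real.zero_rpow (by positivity)]

theorem modSmooth_eq_sSup_finiteDiffNorm (p : ℝ) (r : ℕ) (f : ℝ → ℝ) (t : ℝ) :
    modSmooth p r f t = sSup (finiteDiffNorm p r f '' Ioc 0 t) :=
  rfl

theorem modSmooth_nonneg (p : ℝ) (r : ℕ) (f : ℝ → ℝ) (t : ℝ) : 0 ≤ modSmooth p r f t := by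
  rw [modSmooth_eq_sSup_finiteDiffNorm]
  exact Real.sSup_nonneg fun _ ⟨h, _, hy⟩ => hy ▸ finiteDiffNorm_nonneg p r f h

theorem modSmooth_le_of_finiteDiffNorm_le {p D β t : ℝ} {r : ℕ} {f : ℝ → ℝ} (hp : 0 < p)
    (hr : 1 ≤ r) (hD : 0 ≤ D) (hβ : 0 ≤ β) (ht : 0 < t)
    (hf : ∀ h, 0 < h → h ≤ 1 → finiteDiffNorm p r f h ≤ D * h ^ β) :
    modSmooth p r f t ≤ D * min t 1 ^ β := by
  rw [modSmooth_eq_sSup_finiteDiffNorm]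
  refine Real.sSup_le ?_ (by positivity)
  rintro _ ⟨h, ⟨hh, hht⟩, rfl⟩
  rcases le_or_gt h 1 with hh1 | hh1
  · exact (hf h hh hh1).trans (by gcongr; exact le_min hht hh1)
  · rw [finiteDiffNorm_eq_zero hp f (by nlinarith [(Nat.one_le_cast.mpr hr : (1 : ℝ) ≤ r)])]
    positivity

theorem besov_integrand_le {α β q D M t : ℝ} (ht : 0 < t) (hq : 0 ≤ q) (hD : 0 ≤ D)
    (hM0 : 0 ≤ M) (hM : M ≤ D * t ^ β) :
    (t ^ (-α) * M) ^ q / t ≤ D ^ q * t ^ ((β - α) * q - 1) := by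
  calc (t ^ (-α) * M) ^ q / t ≤ (t ^ (-α) * (D * t ^ β)) ^ q / t := by gcongr
    _ = D ^ q * t ^ ((β - α) * q - 1) := by
        rw [Real.rpow_sub_one ht.ne', ← mul_div_assoc, mul_left_comm, ← Real.rpow_add ht,
          Real.mul_rpow hD (by positivity), ← Real.rpow_mul ht.le, neg_add_eq_sub]

theorem besovSeminorm_lt_top_of_modSmooth_le {p q α β D : ℝ} {f : ℝ → ℝ} (hq : 0 < q)
    (hα : 0 < α) (hαβ : α < β) (hD : 0 ≤ D)
    (hf : ∀ t, 0 < t → modSmooth p (besovR α) f t ≤ D * min t 1 ^ β) :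
    besovSeminorm p q α f < ⊤ := by
  set F : ℝ → ℝ := fun t => (t ^ (-α) * modSmooth p (besovR α) f t) ^ q / t
  have hsmall : ∫⁻ t in Ioo 0 1, ENNReal.ofReal (F t) < ⊤ := by
    have hint : IntegrableOn (fun t : ℝ => D ^ q * t ^ ((β - α) * q - 1)) (Ioo 0 1) :=
      ((intervalIntegral.integrableOn_Ioo_rpow_iff one_pos).mpr (by nlinarith)).const_mul _
    refine lt_of_le_of_lt (setLIntegral_mono' measurableSet_Ioo fun t ht => ?_)
      hint.lintegral_lt_top
    refine ENNReal.ofReal_le_ofReal (besov_integrand_le ht.1 hq.le hD (modSmooth_nonneg ..) ?_)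
    simpa [min_eq_left ht.2.le] using hf t ht.1
  have hlarge : ∫⁻ t in Ici 1, ENNReal.ofReal (F t) < ⊤ := by
    have hint : IntegrableOn (fun t : ℝ => D ^ q * t ^ ((0 - α) * q - 1)) (Ici 1) :=
      (Iff.mpr integrableOn_Ici_iff_integrableOn_Ioi
        ((integrableOn_Ioi_rpow_iff one_pos).mpr (by nlinarith))).const_mul _
    refine lt_of_le_of_lt (setLIntegral_mono' measurableSet_Ici fun t ht => ?_)
      hint.lintegral_lt_top
    have ht0 : (0 : ℝ) < t := one_pos.trans_le ht
    refine ENNReal.ofReal_le_ofReal (besov_integrand_le ht0 hq.le hD (modSmooth_nonneg ..) ?_)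
    simpa [min_eq_right (show (1 : ℝ) ≤ t from ht)] using hf t ht0
  refine ENNReal.rpow_lt_top_of_nonneg (by positivity) (lt_of_le_of_lt ?_
    (ENNReal.add_lt_top.mpr ⟨hsmall, hlarge⟩)).ne
  refine (lintegral_mono_set fun t (ht : 0 < t) => ?_).trans (lintegral_union_le _ _ _)
  rcases lt_or_ge t 1 with ht1 | ht1
  exacts [Or.inl ⟨ht, ht1⟩, Or.inr ht1]

theorem besovSeminorm_lt_top_of_finiteDiffNorm_le {p q α β D : ℝ} {f : ℝ → ℝ} (hp : 0 < p)
    (hq : 0 < q) (hα : 0 < α) (hαβ : α < β) (hD : 0 ≤ D)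
    (hf : ∀ h, 0 < h → h ≤ 1 → finiteDiffNorm p (besovR α) f h ≤ D * h ^ β) :
    besovSeminorm p q α f < ⊤ :=
  besovSeminorm_lt_top_of_modSmooth_le hq hα hαβ hD fun _ ht =>
    modSmooth_le_of_finiteDiffNorm_le hp (Nat.le_add_left 1 _) hD (hα.trans hαβ).le ht hf

section truncPowSum

variable {ι : Type*} [Fintype ι] (c a : ι → ℝ) {k r : ℕ} {h : ℝ}

theorem finiteDiffNorm_sum_truncPow_le_of_le_degree (ha : ∀ i, a i ≤ 1) (hrk : r ≤ k) {p : ℝ}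
    (hp : 0 < p) (hh : 0 < h) (hh1 : h ≤ 1) :
    finiteDiffNorm p r (fun y => ∑ i, c i * truncPow k (a i) y) h
      ≤ (∑ i, |c i|) * (2 ^ r * (r + 1) ^ k) * h ^ (r : ℝ) := by
  have hrh : 0 ≤ r * h := by positivity
  calc finiteDiffNorm p r (fun y => ∑ i, c i * truncPow k (a i) y) h
      ≤ 1 ^ (1 / p) * ((∑ i, |c i|) * (2 ^ r * (r + 1) ^ k * h ^ r)) := by
        refine integral_abs_rpow_rpow_le hp (by positivity) zero_le_one measurableSet_Ioo
          measurableSet_Ioo (by rw [Real.volume_Ioo, sub_zero]) ?_ ?_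
        · exact fun x hx => abs_finiteDiff_sum_le _ _ _ fun i _ =>
            abs_finiteDiff_truncPow_le_pow hrk hh.le hh1 (by linarith [ha i, hx.1])
        · exact fun x hx hx1 => absurd ⟨hx.1, by linarith [hx.2]⟩ hx1
    _ = (∑ i, |c i|) * (2 ^ r * (r + 1) ^ k) * h ^ (r : ℝ) := by
        rw [Real.one_rpow, Real.rpow_natCast]
        ring

theorem finiteDiffNorm_sum_truncPow_le_of_degree_lt (hkr : k < r) {p : ℝ} (hp : 0 < p)
    (hh : 0 < h) :
    finiteDiffNorm p r (fun y => ∑ i, c i * truncPow k (a i) y) h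
      ≤ (∑ i, |c i|) * (2 ^ r * r ^ k * (Fintype.card ι * r) ^ (1 / p)) * h ^ (k + 1 / p) := by
  have hU :
      volume (⋃ i, Icc (a i - r * h) (a i)) ≤ ENNReal.ofReal (Fintype.card ι * r * h) := by
    refine (measure_iUnion_fintype_le _ _).trans_eq ?_
    rw [Finset.sum_congr rfl fun i _ => by rw [Real.volume_Icc, sub_sub_cancel],
      Finset.sum_const, Finset.card_univ, nsmul_eq_mul, mul_assoc,
      ENNReal.ofReal_mul (Nat.cast_nonneg (Fintype.card ι)), ENNReal.ofReal_natCast]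
  calc finiteDiffNorm p r (fun y => ∑ i, c i * truncPow k (a i) y) h
      ≤ (Fintype.card ι * r * h) ^ (1 / p) * ((∑ i, |c i|) * (2 ^ r * (r * h) ^ k)) := by
        refine integral_abs_rpow_rpow_le hp (by positivity) (by positivity) measurableSet_Ioo
          (MeasurableSet.iUnion fun _ => measurableSet_Icc) hU ?_ ?_
        · exact fun x _ => abs_finiteDiff_sum_le _ _ _ fun i _ =>
            abs_finiteDiff_truncPow_le_of_degree_lt hkr hh.le
        · intro x _ hx
          rw [finiteDiff_sum]
          refine Finset.sum_eq_zero fun i _ => ?_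
          rw [finiteDiff_truncPow_eq_zero_of_notMem hkr hh.le fun hi => hx (mem_iUnion.mpr ⟨i, hi⟩),
            mul_zero]
    _ = (∑ i, |c i|) * (2 ^ r * r ^ k * (Fintype.card ι * r) ^ (1 / p)) * h ^ (k + 1 / p) := by
        rw [Real.mul_rpow (by positivity) hh.le, Real.rpow_add hh, Real.rpow_natCast, mul_pow]
        ring

theorem memLp_sum_truncPow (ha : ∀ i, a i ≤ 1) (p : ℝ≥0∞) :
    MemLp (fun y => ∑ i, c i * truncPow k (a i) y) p (volume.restrict (Icc 0 1)) := by
  refine MemLp.of_bound (Finset.measurable_sum _ fun i _ =>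
    (measurable_truncPow k (a i)).const_mul (c i)).aestronglyMeasurable (∑ i, |c i|)
    (ae_restrict_of_forall_mem measurableSet_Icc fun x hx => ?_)
  refine (Finset.abs_sum_le_sum_abs _ _).trans (Finset.sum_le_sum fun i _ => ?_)
  have hle : |truncPow k (a i) x| ≤ 1 := by
    simpa using abs_truncPow_le (k := k) zero_le_one (by linarith [ha i, hx.1])
  rw [abs_mul]
  exact mul_le_of_le_one_right (abs_nonneg _) hle

theorem besovSeminorm_sum_truncPow_lt_top (ha : ∀ i, a i ≤ 1) {p q α : ℝ} (hp : 1 ≤ p)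
    (hq : 0 < q) (hα : 0 < α) (hαk : α < k + 1 / p) :
    besovSeminorm p q α (fun y => ∑ i, c i * truncPow k (a i) y) < ⊤ := by
  have hp0 : 0 < p := one_pos.trans_le hp
  have hαr : α < besovR α := by simpa [besovR] using Nat.lt_floor_add_one α
  have hrk : besovR α ≤ k + 1 := by
    have : α < k + 1 := hαk.trans_le (by gcongr; exact (div_le_one hp0).mpr hp)
    have : ⌊α⌋₊ < k + 1 := (Nat.floor_lt hα.le).mpr (by exact_mod_cast this)
    rw [besovR]
    omega
  rcases hrk.lt_or_eq with hrk | hrk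
  · exact besovSeminorm_lt_top_of_finiteDiffNorm_le hp0 hq hα hαr (by positivity)
      fun h hh hh1 => finiteDiffNorm_sum_truncPow_le_of_le_degree c a ha (by omega) hp0 hh hh1
  · exact besovSeminorm_lt_top_of_finiteDiffNorm_le hp0 hq hα hαk (by positivity)
      fun h hh _ => finiteDiffNorm_sum_truncPow_le_of_degree_lt c a (by omega) hp0 hh

theorem memBesov_sum_truncPow (ha : ∀ i, a i ≤ 1) {p q α : ℝ} (hp : 1 ≤ p) (hq : 0 < q)
    (hα : 0 < α) (hαk : α < k + 1 / p) :
    memBesov p q α (fun y => ∑ i, c i * truncPow k (a i) y) :=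
  ⟨memLp_sum_truncPow c a ha _, besovSeminorm_sum_truncPow_lt_top c a ha hp hq hα hαk⟩

end truncPowSum

theorem bspline_mem_besov_general (k : ℕ) (ξ : Fin (k + 2) → ℝ) (hξ : StrictMono ξ)
    (hξ1 : ξ (Fin.last (k + 1)) ≤ 1)
    (p q α : ℝ) (hp : 1 ≤ p) (hq : 1 ≤ q) (hα : 0 < α) (hαk : α < k + 1 / p) :
    memBesov p q α (bspline k ξ) := by
  have hrep : bspline k ξ = fun x =>
      ∑ i, (ξ (Fin.last (k + 1)) - ξ 0) * knotWeight ξ i * truncPow k (ξ i) x := by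
    funext x
    rw [bspline_eq_sum_truncPow hξ x, Finset.mul_sum]
    simp only [mul_assoc]
  rw [hrep]
  exact memBesov_sum_truncPow _ _ (fun i => (hξ.monotone (Fin.le_last i)).trans hξ1) hp
    (one_pos.trans_le hq) hα hαk

/-- Theorem 1 of the paper: for `k ≥ 0`, a strictly increasing knot
vector in `[0,1]`, `1 ≤ p, q < ∞` and `0 < α < k + 1/p`, the B-spline basis
function `B_k(·; ξ)` belongs to the Besov space `B^α_{p,q}([0,1])`. -/
theorem bspline_mem_besov (k : ℕ) (ξ : Fin (k + 2) → ℝ) (hξ : StrictMono ξ)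
    (hξ0 : 0 ≤ ξ 0) (hξ1 : ξ (Fin.last (k + 1)) ≤ 1)
    (p q α : ℝ) (hp : 1 ≤ p) (hq : 1 ≤ q) (hα : 0 < α) (hαk : α < k + 1 / p) :
    memBesov p q α (bspline k ξ) :=
  bspline_mem_besov_general k ξ hξ hξ1 p q α hp hq hα hαk
end

section
/- Let 1 ≤ p < ∞ and ε > 0, and set ζ = (ε/2)^p. Then for all integers k, k' ≥ 0 and all strictly increasing knot vectors ξ ∈ ℝ^{k+2} and ξ' ∈ ℝ^{k'+2} whose ranges satisfy r(ξ) < ζ and r(ξ') < ζ, the two B-spline basis functions are L^p-close: ( ∫_ℝ |B_k(x; ξ) − B_{k'}(x; ξ')|^p dx )^{1/p} ≤ r(ξ)^{1/p} + r(ξ')^{1/p} < ε. -/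
/-!
Every B-spline basis function satisfies `0 ≤ B_k(·; ξ) ≤ 1` and vanishes outside
`[ξ_1, ξ_{k+2})`, so it is dominated by the indicator of an interval of length `r(ξ)` and
`‖B_k(·; ξ)‖_p ≤ r(ξ)^{1/p}`. Minkowski's inequality gives the first bound, and
`r(ξ) < (ε/2)^p` gives `r(ξ)^{1/p} < ε/2`.

The bound `B_k ≤ 1` is the only delicate point. With the ramp `ρ_ξ(x) = (x - ξ_1) / r(ξ)`,
which lies in `[0, 1]` on the support of `B_k(·; ξ)`, the recursion reads
`B_{k+1}(ξ) = ρ_η B_k(η) + (1 - ρ_θ) B_k(θ)`, where `η` and `θ` drop the last and the first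
knot of `ξ`. Summed over `n + 1` consecutive windows of a strictly increasing knot sequence this
telescopes to at most the sum of the degree-`k` B-splines over `n + 2` windows, so by induction
on `k` every such window sum is at most `1`; and `ξ` is a single window of an extension of it.
-/

open MeasureTheory Set
open scoped ENNReal

theorem bspline_zero_eq_indicator (ξ : Fin 2 → ℝ) :
    bspline 0 ξ = (Ico (ξ 0) (ξ 1)).indicator fun _ => 1 := by
  funext x
  simp [bspline, Set.indicator, Set.mem_Ico]

theorem bspline_eq_zero_of_notMem {k : ℕ} {ξ : Fin (k + 2) → ℝ} (hξ : Monotone ξ) {x : ℝ}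
    (hx : x ∉ Ico (ξ 0) (ξ (Fin.last (k + 1)))) : bspline k ξ x = 0 := by
  induction k with
  | zero => simpa [bspline_zero_eq_indicator] using hx
  | succ k ih =>
    have h_init : bspline k (fun i => ξ i.castSucc) x = 0 :=
      ih (hξ.comp Fin.strictMono_castSucc.monotone) fun h =>
        hx (Ico_subset_Ico le_rfl (hξ (Fin.le_last _)) h)
    have h_tail : bspline k (fun i => ξ i.succ) x = 0 :=
      ih (hξ.comp Fin.strictMono_succ.monotone) fun h =>
        hx (Ico_subset_Ico (hξ (Fin.zero_le _)) (by simp) h)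
    simp [bspline, h_init, h_tail]

theorem bspline_nonneg {k : ℕ} {ξ : Fin (k + 2) → ℝ} (hξ : StrictMono ξ) (x : ℝ) :
    0 ≤ bspline k ξ x := by
  induction k with
  | zero => rw [bspline_zero_eq_indicator]; exact indicator_nonneg (fun _ _ => zero_le_one) x
  | succ k ih =>
    by_cases hx : x ∈ Ico (ξ 0) (ξ (Fin.last (k + 2)))
    · have h_init : ξ 0 < ξ ⟨k + 1, by omega⟩ := hξ (by simp [Fin.lt_def])
      have h_tail : ξ 1 < ξ (Fin.last (k + 2)) := hξ (by simp [Fin.lt_def])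
      rw [bspline]
      exact add_nonneg
        (mul_nonneg (div_nonneg (by linarith [hx.1]) (by linarith))
          (ih (hξ.comp Fin.strictMono_castSucc)))
        (mul_nonneg (div_nonneg (by linarith [hx.2]) (by linarith))
          (ih (hξ.comp Fin.strictMono_succ)))
    · exact (bspline_eq_zero_of_notMem hξ.monotone hx).ge

theorem bspline_measurable (k : ℕ) (ξ : Fin (k + 2) → ℝ) : Measurable (bspline k ξ) := by
  induction k with
  | zero => rw [bspline_zero_eq_indicator]; exact measurable_const.indicator measurableSet_Ico
  | succ k ih =>
    have h_init := ih fun i => ξ i.castSucc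
    have h_tail := ih fun i => ξ i.succ
    change Measurable fun x => bspline (k + 1) ξ x
    simp only [bspline]
    fun_prop

noncomputable def knotRamp {k : ℕ} (ξ : Fin (k + 2) → ℝ) (x : ℝ) : ℝ :=
  (x - ξ 0) / (ξ (Fin.last (k + 1)) - ξ 0)

theorem bspline_succ_eq_knotRamp {k : ℕ} {ξ : Fin (k + 3) → ℝ} (hξ : StrictMono ξ) (x : ℝ) :
    bspline (k + 1) ξ x =
      knotRamp (fun i => ξ i.castSucc) x * bspline k (fun i => ξ i.castSucc) x +
        (1 - knotRamp (fun i => ξ i.succ) x) * bspline k (fun i => ξ i.succ) x := by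
  have h_tail : ξ (Fin.last (k + 2)) - ξ 1 ≠ 0 := sub_ne_zero.mpr (hξ (by simp [Fin.lt_def])).ne'
  rw [bspline, knotRamp, knotRamp, Fin.succ_last, Fin.succ_zero_eq_one]
  congr 2
  field_simp
  ring

theorem knotRamp_mul_bspline_mem_Icc {k : ℕ} {ξ : Fin (k + 2) → ℝ} (hξ : StrictMono ξ)
    (x : ℝ) : knotRamp ξ x * bspline k ξ x ∈ Icc 0 (bspline k ξ x) := by
  by_cases hx : x ∈ Ico (ξ 0) (ξ (Fin.last (k + 1)))
  · have hr : 0 < ξ (Fin.last (k + 1)) - ξ 0 := sub_pos.mpr (hξ (by simp [Fin.lt_def]))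
    have h_ramp : knotRamp ξ x ∈ Icc 0 1 :=
      ⟨div_nonneg (by linarith [hx.1]) hr.le, (div_le_one hr).mpr (by linarith [hx.2])⟩
    exact ⟨mul_nonneg h_ramp.1 (bspline_nonneg hξ x),
      mul_le_of_le_one_left (bspline_nonneg hξ x) h_ramp.2⟩
  · simp [bspline_eq_zero_of_notMem hξ.monotone hx]

theorem sum_bspline_shift_le_one (k n : ℕ) {τ : ℕ → ℝ} (hτ : StrictMono τ) (x : ℝ) :
    ∑ i ∈ Finset.range (n + 1), bspline k (fun j : Fin (k + 2) => τ (i + j)) x ≤ 1 := by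
  induction k generalizing n with
  | zero =>
    have h_disj : (↑(Finset.range (n + 1)) : Set ℕ).PairwiseDisjoint
        fun i => Ico (τ i) (τ (i + 1)) :=
      hτ.monotone.pairwise_disjoint_on_Ico_succ.set_pairwise _
    simp only [bspline_zero_eq_indicator, Fin.val_zero, Fin.val_one, add_zero]
    rw [← Finset.indicator_biUnion_apply _ _ h_disj]
    exact indicator_apply_le' (fun _ => le_rfl) fun _ => zero_le_one
  | succ k ih =>
    set W : ℕ → ℝ := fun i => bspline k (fun j : Fin (k + 2) => τ (i + j)) x
    set a : ℕ → ℝ := fun i => knotRamp (fun j : Fin (k + 2) => τ (i + j)) x * W i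
    have h_window : ∀ i, StrictMono fun j : Fin (k + 2) => τ (i + j) :=
      fun i _ _ h => hτ (Nat.add_lt_add_left h i)
    have h_term : ∀ i, bspline (k + 1) (fun j : Fin (k + 3) => τ (i + j)) x =
        (a i - a (i + 1)) + W (i + 1) := by
      intro i
      have h_shift : (fun j : Fin (k + 2) => τ (i + j.succ)) =
          fun j : Fin (k + 2) => τ (i + 1 + j) :=
        funext fun j => congrArg τ (by simp only [Fin.val_succ]; omega)
      rw [bspline_succ_eq_knotRamp (fun _ _ h => hτ (Nat.add_lt_add_left h i))]
      simp only [Fin.val_castSucc, h_shift, a, W]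
      ring
    have ha_zero := knotRamp_mul_bspline_mem_Icc (h_window 0) x
    have ha_last := knotRamp_mul_bspline_mem_Icc (h_window (n + 1)) x
    calc ∑ i ∈ Finset.range (n + 1), bspline (k + 1) (fun j : Fin (k + 3) => τ (i + j)) x
        = a 0 - a (n + 1) + ∑ i ∈ Finset.range (n + 1), W (i + 1) := by
          simp only [h_term, Finset.sum_add_distrib, Finset.sum_range_sub']
      _ ≤ ∑ i ∈ Finset.range (n + 2), W i := by
          rw [Finset.sum_range_succ' W]
          linarith [ha_zero.2, ha_last.1]
      _ ≤ 1 := ih (n + 1)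

theorem exists_strictMono_nat_extension {n : ℕ} {ξ : Fin (n + 1) → ℝ} (hξ : StrictMono ξ) :
    ∃ τ : ℕ → ℝ, StrictMono τ ∧ ∀ j : Fin (n + 1), τ j = ξ j := by
  refine ⟨fun j => if h : j < n + 1 then ξ ⟨j, h⟩ else ξ (Fin.last n) + (j - n), ?_,
    fun j => by simp [j.isLt]⟩
  refine strictMono_nat_of_lt_succ fun j => ?_
  by_cases hj : j + 1 < n + 1
  · simp only [dif_pos hj, dif_pos (by omega : j < n + 1)]
    exact hξ (by simp [Fin.lt_def])
  by_cases hj' : j < n + 1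
  · obtain rfl : j = n := by omega
    simp only [dif_neg hj, dif_pos hj', Nat.cast_add, Nat.cast_one, add_sub_cancel_left]
    exact lt_add_one _
  · simp only [dif_neg hj, dif_neg hj', Nat.cast_add, Nat.cast_one]
    linarith

theorem bspline_le_one {k : ℕ} {ξ : Fin (k + 2) → ℝ} (hξ : StrictMono ξ) (x : ℝ) :
    bspline k ξ x ≤ 1 := by
  obtain ⟨τ, hτ, hτξ⟩ := exists_strictMono_nat_extension hξ
  simpa [hτξ] using sum_bspline_shift_le_one k 0 hτ x

theorem norm_bspline_le_indicator {k : ℕ} {ξ : Fin (k + 2) → ℝ} (hξ : StrictMono ξ) (x : ℝ) :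
    ‖bspline k ξ x‖ ≤ ‖(Ico (ξ 0) (ξ (Fin.last (k + 1)))).indicator (fun _ => (1 : ℝ)) x‖ := by
  by_cases hx : x ∈ Ico (ξ 0) (ξ (Fin.last (k + 1)))
  · rw [indicator_of_mem hx, Real.norm_of_nonneg (bspline_nonneg hξ x), norm_one]
    exact bspline_le_one hξ x
  · simp [bspline_eq_zero_of_notMem hξ.monotone hx]

theorem eLpNorm_bspline_le {k : ℕ} {ξ : Fin (k + 2) → ℝ} (hξ : StrictMono ξ) (p : ℝ≥0∞) :
    eLpNorm (bspline k ξ) p volume ≤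
      ENNReal.ofReal (ξ (Fin.last (k + 1)) - ξ 0) ^ (1 / p.toReal) :=
  (eLpNorm_mono (norm_bspline_le_indicator hξ)).trans
    ((eLpNorm_indicator_const_le _ _).trans (by simp [Real.volume_Ico]))

theorem memLp_bspline {k : ℕ} {ξ : Fin (k + 2) → ℝ} (hξ : StrictMono ξ) (p : ℝ≥0∞) :
    MemLp (bspline k ξ) p volume :=
  ⟨(bspline_measurable k ξ).aestronglyMeasurable, (eLpNorm_bspline_le hξ p).trans_lt
    (ENNReal.rpow_lt_top_of_nonneg (by positivity) ENNReal.ofReal_ne_top)⟩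

theorem toReal_eLpNorm_bspline_le {k : ℕ} {ξ : Fin (k + 2) → ℝ} (hξ : StrictMono ξ)
    {p : ℝ} (hp : 0 ≤ p) :
    (eLpNorm (bspline k ξ) (ENNReal.ofReal p) volume).toReal ≤
      (ξ (Fin.last (k + 1)) - ξ 0) ^ (1 / p) := by
  have hr : 0 ≤ ξ (Fin.last (k + 1)) - ξ 0 := sub_nonneg.mpr (hξ.monotone (Fin.zero_le _))
  refine ENNReal.toReal_le_of_le_ofReal (by positivity) ?_
  rw [← ENNReal.ofReal_rpow_of_nonneg hr (by positivity)]
  simpa [ENNReal.toReal_ofReal hp] using eLpNorm_bspline_le hξ (ENNReal.ofReal p)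

theorem integral_abs_sub_rpow_rpow_le {α : Type*} [MeasurableSpace α] {μ : Measure α}
    {f g : α → ℝ} {p : ℝ} (hp : 1 ≤ p) (hf : MemLp f (ENNReal.ofReal p) μ)
    (hg : MemLp g (ENNReal.ofReal p) μ) :
    (∫ x, |f x - g x| ^ p ∂μ) ^ (1 / p) ≤
      (eLpNorm f (ENNReal.ofReal p) μ).toReal + (eLpNorm g (ENNReal.ofReal p) μ).toReal := by
  have hp0 : 0 < p := by linarith
  have h_norm : eLpNorm (f - g) (ENNReal.ofReal p) μ =
      ENNReal.ofReal ((∫ x, |f x - g x| ^ p ∂μ) ^ (1 / p)) := by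
    rw [(hf.sub hg).eLpNorm_eq_integral_rpow_norm (by simpa using hp0) ENNReal.ofReal_ne_top,
      ENNReal.toReal_ofReal hp0.le, one_div]
    rfl
  rw [← ENNReal.toReal_ofReal (by positivity : 0 ≤ (∫ x, |f x - g x| ^ p ∂μ) ^ (1 / p)),
    ← h_norm]
  exact ENNReal.toReal_le_add
    (eLpNorm_sub_le hf.aestronglyMeasurable hg.aestronglyMeasurable (by simpa using hp))
    hf.eLpNorm_ne_top hg.eLpNorm_ne_top

/-- with `ζ = (ε/2)^p`, any two B-spline basis functions whose knot
ranges are `< ζ` are `L^p`-close: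
`‖B_k(·; ξ) − B_{k'}(·; ξ')‖_p ≤ r(ξ)^{1/p} + r(ξ')^{1/p} < ε`. -/
theorem bspline_lp_close_of_small_range (p ε : ℝ) (hp : 1 ≤ p) (hε : 0 < ε)
    (ζ : ℝ) (hζ : ζ = (ε / 2) ^ p)
    (k k' : ℕ) (ξ : Fin (k + 2) → ℝ) (ξ' : Fin (k' + 2) → ℝ)
    (hξ : StrictMono ξ) (hξ' : StrictMono ξ')
    (hr : ξ (Fin.last (k + 1)) - ξ 0 < ζ) (hr' : ξ' (Fin.last (k' + 1)) - ξ' 0 < ζ) :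
    (∫ x : ℝ, |bspline k ξ x - bspline k' ξ' x| ^ p) ^ (1 / p) ≤
        (ξ (Fin.last (k + 1)) - ξ 0) ^ (1 / p) +
          (ξ' (Fin.last (k' + 1)) - ξ' 0) ^ (1 / p) ∧
      (ξ (Fin.last (k + 1)) - ξ 0) ^ (1 / p) +
          (ξ' (Fin.last (k' + 1)) - ξ' 0) ^ (1 / p) < ε := by
  have hp0 : 0 < p := by linarith
  have root_lt {m : ℕ} {η : Fin (m + 2) → ℝ} (hη : StrictMono η)
      (h : η (Fin.last (m + 1)) - η 0 < ζ) : (η (Fin.last (m + 1)) - η 0) ^ (1 / p) < ε / 2 := by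
    rw [one_div, Real.rpow_inv_lt_iff_of_pos (sub_nonneg.mpr (hη.monotone (Fin.zero_le _)))
      (by positivity) hp0, ← hζ]
    exact h
  refine ⟨?_, by linarith [root_lt hξ hr, root_lt hξ' hr']⟩
  calc (∫ x : ℝ, |bspline k ξ x - bspline k' ξ' x| ^ p) ^ (1 / p)
      ≤ (eLpNorm (bspline k ξ) (ENNReal.ofReal p) volume).toReal +
          (eLpNorm (bspline k' ξ') (ENNReal.ofReal p) volume).toReal :=
        integral_abs_sub_rpow_rpow_le hp (memLp_bspline hξ _) (memLp_bspline hξ' _)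
    _ ≤ _ := add_le_add (toReal_eLpNorm_bspline_le hξ hp0.le) (toReal_eLpNorm_bspline_le hξ' hp0.le)
end
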